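/- With z and ϑ defined via harmonic measures of the four arcs as above, as ζ → e^{iπ/4} within 𝔻 one has z(ζ) = (1+i)/2 + ((1−i)/π)(arg(e^{iπ/4}−ζ) − π/4) + O(|ζ−e^{iπ/4}|) and ϑ(ζ) = (√2/π)(arg(e^{iπ/4}−ζ) − π/4) + O(|ζ−e^{iπ/4}|), where arg(e^{iπ/4}−ζ) ∈ (−π/4, 3π/4). In particular, the closure of the image of ζ ↦ (z(ζ),ϑ(ζ)) contains the full straight segment in ℂ×ℝ with endpoints (1, √2/2) and (i, −√2/2). -/

import Mathlib

/-!
Each `a m` is a continuous lift on the disc of the argument of `e^{iθ_m} - ζ`. Since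
`1 - e^{-iθ_m} ζ` stays in the right half-plane there, uniqueness of lifts identifies `a m` with
`θ_m + arg (1 - e^{-iθ_m} ζ)`. At the corner `e^{iπ/4}` only the branch with `θ_0 = π/4` is
singular; the other three are smooth there, so after writing `z` and `ϑ` through the `a m`
everything except the `a 0` term is `O(|ζ - e^{iπ/4}|)`. Along the ray `e^{iπ/4} (1 - r e^{is})`,
`r → 0⁺`, the value `a 0 = π/4 + s` stays fixed for every `|s| < π/2`, so each point of the open
segment, hence of the segment, is a limit of image points.
-/

open Complex Metric

noncomputable def arcAngle (m : Fin 4) : ℝ := Real.pi / 4 + (m : ℕ) * (Real.pi / 2)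

open Filter Topology Asymptotics Set
open scoped Real

theorem IsPreconnected.eqOn_arg_comp {X : Type*} [TopologicalSpace X] {U : Set X}
    (hU : IsPreconnected U) {f : X → ℝ} {g : X → ℂ} (hf : ContinuousOn f U)
    (hg : ContinuousOn g U) (hgU : MapsTo g U slitPlane)
    (hfg : ∀ x ∈ U, (‖g x‖ : ℂ) * exp (f x * I) = g x) {x₀ : X} (hx₀ : x₀ ∈ U)
    (hf₀ : f x₀ = arg (g x₀)) : EqOn f (arg ∘ g) U := by
  have hcont : ContinuousOn (fun x => f x - arg (g x)) U :=
    hf.sub <| (continuousOn_arg.mono fun _ h => h).comp hg hgU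
  have hmaps : MapsTo (fun x => f x - arg (g x)) U (AddSubgroup.zmultiples (2 * π)) := by
    intro x hx
    have hpos : 0 < ‖g x‖ := norm_pos_iff.2 (slitPlane_ne_zero (hgU hx))
    have : (arg (g x) : Real.Angle) = f x := by
      rw [← hfg x hx, exp_mul_I, ← ofReal_cos, ← ofReal_sin, ← Real.Angle.cos_coe,
        ← Real.Angle.sin_coe]
      exact arg_mul_cos_add_sin_mul_I_coe_angle hpos _
    exact QuotientAddGroup.eq_iff_sub_mem.1 this.symm
  intro x hx
  have := hU.constant_of_mapsTo (isDiscrete_iff_discreteTopology.2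
    (inferInstanceAs (DiscreteTopology (AddSubgroup.zmultiples (2 * π))))) hcont hmaps hx hx₀
  rwa [hf₀, sub_self, sub_eq_zero] at this

lemma one_sub_exp_neg_mul_I (ψ : ℝ) :
    1 - exp (-ψ * I) = ↑(2 * Real.sin (ψ / 2)) * exp (↑((π - ψ) / 2) * I) := by
  set e := exp (-(ψ / 2) * I)
  have hI : exp (↑((π - ψ) / 2) * I) = I * e := by
    rw [show (↑((π - ψ) / 2) : ℂ) * I = π / 2 * I + -(ψ / 2) * I by push_cast; ring, exp_add,
      exp_pi_div_two_mul_I]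
  have h₁ : exp (ψ / 2 * I) * e = 1 := by rw [← exp_add]; ring_nf; exact exp_zero
  have h₂ : e * e = exp (-ψ * I) := by rw [← exp_add]; ring_nf
  rw [hI, ofReal_mul, ofReal_sin, Complex.sin]
  push_cast
  linear_combination (-1 : ℂ) * h₁ + h₂ - (e * e - exp (ψ / 2 * I) * e) * I_sq

lemma arg_one_sub_exp_neg_mul_I {ψ : ℝ} (hψ : ψ ∈ Ioo 0 (2 * π)) :
    arg (1 - exp (-ψ * I)) = (π - ψ) / 2 := by
  have hsin : 0 < Real.sin (ψ / 2) :=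
    Real.sin_pos_of_pos_of_lt_pi (by linarith [hψ.1]) (by linarith [hψ.2])
  rw [one_sub_exp_neg_mul_I, arg_real_mul _ (by positivity), exp_mul_I, arg_cos_add_sin_mul_I]
  constructor <;> linarith [hψ.1, hψ.2, Real.pi_pos]

lemma one_sub_exp_neg_mul_I_mem_slitPlane {ψ : ℝ} (hψ : ψ ∈ Ioo 0 (2 * π)) :
    1 - exp (-ψ * I) ∈ slitPlane := by
  have hsin : 0 < Real.sin (ψ / 2) :=
    Real.sin_pos_of_pos_of_lt_pi (by linarith [hψ.1]) (by linarith [hψ.2])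
  refine mem_slitPlane_iff_arg.2 ⟨?_, ?_⟩
  · rw [arg_one_sub_exp_neg_mul_I hψ]
    linarith [hψ.1, Real.pi_pos]
  · rw [one_sub_exp_neg_mul_I]
    exact mul_ne_zero (ofReal_ne_zero.2 (by positivity)) (exp_ne_zero _)

/-- The continuous branch of `arg (exp (θ * I) - ζ)` on the unit disc taking the value `θ` at
`ζ = 0`. -/
noncomputable def branchArg (θ : ℝ) (ζ : ℂ) : ℝ := θ + arg (1 - exp (-θ * I) * ζ)

lemma norm_exp_neg_ofReal_mul_I (θ : ℝ) : ‖exp (-θ * I)‖ = 1 := by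
  simpa using norm_exp_ofReal_mul_I (-θ)

lemma re_one_sub_exp_neg_mul_I_mul_pos (θ : ℝ) {ζ : ℂ} (hζ : ζ ∈ ball (0 : ℂ) 1) :
    0 < (1 - exp (-θ * I) * ζ).re := by
  have h := (re_le_norm (exp (-θ * I) * ζ)).trans_lt <| by
    rwa [norm_mul, norm_exp_neg_ofReal_mul_I, one_mul, ← mem_ball_zero_iff]
  simpa [sub_pos] using h

lemma branchArg_mem_Ioo (θ : ℝ) {ζ : ℂ} (hζ : ζ ∈ ball (0 : ℂ) 1) :
    branchArg θ ζ ∈ Ioo (θ - π / 2) (θ + π / 2) := by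
  have h := abs_lt.1 <| abs_arg_lt_pi_div_two_iff.2 <|
    Or.inl (re_one_sub_exp_neg_mul_I_mul_pos θ hζ)
  exact ⟨by unfold branchArg; linarith [h.1], by unfold branchArg; linarith [h.2]⟩

lemma eqOn_branchArg {θ : ℝ} {f : ℂ → ℝ} (hf : ContinuousOn f (ball 0 1))
    (hfarg : ∀ ζ ∈ ball (0 : ℂ) 1, (‖exp (θ * I) - ζ‖ : ℂ) * exp (f ζ * I) = exp (θ * I) - ζ)
    (hf0 : f 0 = θ) : EqOn f (branchArg θ) (ball 0 1) := by
  set g : ℂ → ℂ := fun ζ => 1 - exp (-θ * I) * ζ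
  have hg : ∀ ζ, g ζ = exp (-θ * I) * (exp (θ * I) - ζ) := fun ζ => by
    simp only [g, mul_sub, ← exp_add, neg_mul, neg_add_cancel, exp_zero]
  have hlift : EqOn (fun ζ => f ζ - θ) (arg ∘ g) (ball 0 1) := by
    refine (convex_ball (0 : ℂ) 1).isPreconnected.eqOn_arg_comp (hf.sub continuousOn_const)
      (by fun_prop) (fun ζ hζ => mem_slitPlane_iff.2 (Or.inl ?_)) (fun ζ hζ => ?_)
      (mem_ball_self one_pos) (by simp [g, hf0])
    · exact re_one_sub_exp_neg_mul_I_mul_pos θ hζ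
    · rw [hg, norm_mul, norm_exp_neg_ofReal_mul_I, one_mul, ofReal_sub, sub_mul, exp_sub,
        mul_div_assoc', hfarg ζ hζ, div_eq_mul_inv, ← exp_neg, neg_mul, mul_comm]
  intro ζ hζ
  have := hlift hζ
  simp only [Function.comp_apply] at this
  rw [branchArg, ← this, add_sub_cancel]

lemma one_sub_exp_neg_mul_I_mul_exp_mul_I (θ φ : ℝ) :
    1 - exp (-θ * I) * exp (φ * I) = 1 - exp (-↑(θ - φ) * I) := by
  rw [← exp_add]; push_cast; ring_nf

lemma branchArg_exp_mul_I {θ φ : ℝ} (h : θ - φ ∈ Ioo 0 (2 * π)) :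
    branchArg θ (exp (φ * I)) = (θ + φ + π) / 2 := by
  rw [branchArg, one_sub_exp_neg_mul_I_mul_exp_mul_I, arg_one_sub_exp_neg_mul_I h]
  ring

lemma differentiableAt_branchArg {θ : ℝ} {ζ : ℂ} (h : 1 - exp (-θ * I) * ζ ∈ slitPlane) :
    DifferentiableAt ℝ (branchArg θ) ζ := by
  have hlog : DifferentiableAt ℝ (fun ζ => log (1 - exp (-θ * I) * ζ)) ζ :=
    ((by fun_prop : DifferentiableAt ℂ (fun ζ => 1 - exp (-θ * I) * ζ) ζ).clog h).restrictScalars ℝ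
  show DifferentiableAt ℝ (fun ζ => θ + arg (1 - exp (-θ * I) * ζ)) ζ
  simp only [← log_im]
  exact (differentiableAt_const θ).add (imCLM.differentiableAt.comp ζ hlog)

lemma branchArg_sub_isBigO {θ φ : ℝ} (h : θ - φ ∈ Ioo 0 (2 * π)) :
    (fun ζ => branchArg θ ζ - branchArg θ (exp (φ * I))) =O[𝓝 (exp (φ * I))]
      fun ζ => ζ - exp (φ * I) := by
  refine (differentiableAt_branchArg ?_).isBigO_sub
  rw [one_sub_exp_neg_mul_I_mul_exp_mul_I]
  exact one_sub_exp_neg_mul_I_mem_slitPlane h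

lemma eventually_mem_ball_and_branchArg_eq (θ : ℝ) {s : ℝ} (hs : s ∈ Ioo (-(π / 2)) (π / 2)) :
    ∀ᶠ r : ℝ in 𝓝[>] 0, exp (θ * I) * (1 - r * exp (s * I)) ∈ ball (0 : ℂ) 1 ∧
      branchArg θ (exp (θ * I) * (1 - r * exp (s * I))) = θ + s := by
  have hcos : 0 < Real.cos s := Real.cos_pos_of_mem_Ioo hs
  filter_upwards [Ioo_mem_nhdsGT (by positivity : (0 : ℝ) < 2 * Real.cos s)] with r hr
  constructor
  · rw [mem_ball_zero_iff, norm_mul, norm_exp_ofReal_mul_I, one_mul,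
      ← sq_lt_one_iff₀ (norm_nonneg _), Complex.sq_norm, normSq_apply]
    simp [exp_mul_I, ← ofReal_cos, ← ofReal_sin]
    linear_combination (r ^ 2) * Real.sin_sq_add_cos_sq s + mul_pos hr.1 (sub_pos.2 hr.2)
  · have h : 1 - exp (-θ * I) * (exp (θ * I) * (1 - r * exp (s * I))) = r * exp (s * I) := by
      rw [← mul_assoc, ← exp_add]; simp
    rw [branchArg, h, arg_real_mul _ hr.1, exp_mul_I,
      arg_cos_add_sin_mul_I ⟨by linarith [hs.1, Real.pi_pos], by linarith [hs.2, Real.pi_pos]⟩]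

lemma mem_closure_image_ball_of_tendsto {E : Type*} [NormedAddCommGroup E] {Φ : ℂ → E}
    {M : ℝ → E} {θ : ℝ}
    (hΦ : Tendsto (fun ζ => Φ ζ - M (branchArg θ ζ)) (𝓝[ball 0 1] (exp (θ * I))) (𝓝 0))
    {s : ℝ} (hs : s ∈ Ioo (-(π / 2)) (π / 2)) : M (θ + s) ∈ closure (Φ '' ball 0 1) := by
  set γ : ℝ → ℂ := fun r => exp (θ * I) * (1 - r * exp (s * I))
  have hray := eventually_mem_ball_and_branchArg_eq θ hs
  have hγ : Tendsto γ (𝓝[>] 0) (𝓝[ball 0 1] (exp (θ * I))) := by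
    refine tendsto_nhdsWithin_iff.2 ⟨?_, hray.mono fun r hr => hr.1⟩
    have : Continuous γ := by fun_prop
    simpa [γ] using (this.tendsto 0).mono_left nhdsWithin_le_nhds
  have hlim : Tendsto (fun r => Φ (γ r)) (𝓝[>] 0) (𝓝 (M (θ + s))) := by
    have := (hΦ.comp hγ).const_add (M (θ + s))
    rw [add_zero] at this
    refine this.congr' (hray.mono fun r hr => ?_)
    simp [Function.comp, γ, hr.2]
  exact mem_closure_of_tendsto hlim (hray.mono fun r hr => mem_image_of_mem Φ hr.1)

lemma arcAngle_sub_pi_div_four_mem_Ioo {m : Fin 4} (hm : m ≠ 0) :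
    arcAngle m - π / 4 ∈ Ioo 0 (2 * π) := by
  have hm1 : (1 : ℝ) ≤ (m : ℕ) := by exact_mod_cast Nat.pos_of_ne_zero (Fin.val_ne_zero_iff.2 hm)
  have hm3 : ((m : ℕ) : ℝ) ≤ 3 := by exact_mod_cast Nat.le_of_lt_succ m.isLt
  simp only [arcAngle, add_sub_cancel_left]
  constructor <;> nlinarith [Real.pi_pos]

noncomputable def cornerDeviation (m : Fin 4) (ζ : ℂ) : ℝ :=
  branchArg (arcAngle m) ζ - branchArg (arcAngle m) (exp (↑(π / 4) * I))

lemma cornerDeviation_eq {m : Fin 4} (hm : m ≠ 0) (ζ : ℂ) :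
    cornerDeviation m ζ = branchArg (arcAngle m) ζ - (arcAngle m + π / 4 + π) / 2 := by
  rw [cornerDeviation, branchArg_exp_mul_I (arcAngle_sub_pi_div_four_mem_Ioo hm)]

/-- `(z, ϑ)` minus its main term at the corner, expressed through the three branches that are
smooth there. -/
noncomputable def cornerRemainder (ζ : ℂ) : ℂ × ℝ :=
  (((1 + I) * cornerDeviation 1 ζ + (-1 + I) * cornerDeviation 2 ζ
      - (1 + I) * cornerDeviation 3 ζ) / π,
    √2 / π * (cornerDeviation 2 ζ - cornerDeviation 1 ζ - cornerDeviation 3 ζ))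

lemma cornerRemainder_isBigO :
    cornerRemainder =O[𝓝 (exp (↑(π / 4) * I))] fun ζ => ζ - exp (↑(π / 4) * I) := by
  have hd : ∀ m : Fin 4, m ≠ 0 →
      cornerDeviation m =O[𝓝 (exp (↑(π / 4) * I))] fun ζ => ζ - exp (↑(π / 4) * I) :=
    fun m hm => branchArg_sub_isBigO (arcAngle_sub_pi_div_four_mem_Ioo hm)
  have hdC : ∀ m : Fin 4, m ≠ 0 → (fun ζ => (cornerDeviation m ζ : ℂ))
      =O[𝓝 (exp (↑(π / 4) * I))] fun ζ => ζ - exp (↑(π / 4) * I) :=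
    fun m hm => isBigO_ofReal_left.2 (hd m hm)
  refine IsBigO.prod_left ?_ ?_
  · simp only [div_eq_inv_mul _ (π : ℂ)]
    exact (((hdC 1 (by decide)).const_mul_left _).add ((hdC 2 (by decide)).const_mul_left _)
      |>.sub ((hdC 3 (by decide)).const_mul_left _)).const_mul_left _
  · exact (((hd 2 (by decide)).sub (hd 1 (by decide))).sub (hd 3 (by decide))).const_mul_left _

noncomputable def cornerMainTerm (α : ℝ) : ℂ × ℝ :=
  ((1 + I) / 2 + ((1 - I) / π) * ((α : ℂ) - π / 4), √2 / π * (α - π / 4))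

lemma segment_subset_closure_image_of_tendsto {Φ : ℂ → ℂ × ℝ}
    (hΦ : Tendsto (fun ζ => Φ ζ - cornerMainTerm (branchArg (π / 4) ζ))
      (𝓝[ball 0 1] (exp (↑(π / 4) * I))) (𝓝 0)) :
    segment ℝ ((1 : ℂ), √2 / 2) (I, -(√2 / 2)) ⊆ closure (Φ '' ball 0 1) := by
  refine segment_subset_closure_openSegment.trans (closure_minimal ?_ isClosed_closure)
  rw [openSegment_eq_image]
  rintro _ ⟨t, ht, rfl⟩
  convert mem_closure_image_ball_of_tendsto hΦ (s := π / 2 - π * t)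
    ⟨by nlinarith [ht.2, Real.pi_pos], by nlinarith [ht.1, Real.pi_pos]⟩ using 1
  simp only [cornerMainTerm, Prod.smul_mk, Prod.mk_add_mk, real_smul, smul_eq_mul, Prod.mk.injEq]
  push_cast
  constructor <;> field_simp <;> ring

/-- Boundary behavior near the corner `e^{iπ/4}`: with the continuous branch
`a 0 ζ = arg(e^{iπ/4}−ζ) ∈ (−π/4, 3π/4)`,
`z(ζ) = (1+i)/2 + ((1−i)/π)(arg(e^{iπ/4}−ζ) − π/4) + O(|ζ−e^{iπ/4}|)` and
`ϑ(ζ) = (√2/π)(arg(e^{iπ/4}−ζ) − π/4) + O(|ζ−e^{iπ/4}|)` as `ζ → e^{iπ/4}` in `𝔻`.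
In particular, the closure of the image of `ζ ↦ (z(ζ),ϑ(ζ))` contains the straight
segment in `ℂ×ℝ` with endpoints `(1, √2/2)` and `(i, −√2/2)`. -/
theorem aztec_surface_corner_asymptotics
    (a : Fin 4 → ℂ → ℝ)
    (hacont : ∀ m, ContinuousOn (a m) (ball 0 1))
    (haarg : ∀ m, ∀ ζ ∈ ball (0:ℂ) 1,
      (‖Complex.exp ((arcAngle m : ℝ) * I) - ζ‖ : ℂ)
          * Complex.exp ((a m ζ : ℝ) * I)
        = Complex.exp ((arcAngle m : ℝ) * I) - ζ)
    (ha0 : ∀ m, a m 0 = arcAngle m)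
    (hmE hmN hmW hmS : ℂ → ℝ)
    (hE : ∀ ζ, hmE ζ = (1 / Real.pi) * (a 0 ζ - (a 3 ζ - 2 * Real.pi)) - 1/4)
    (hN : ∀ ζ, hmN ζ = (1 / Real.pi) * (a 1 ζ - a 0 ζ) - 1/4)
    (hW : ∀ ζ, hmW ζ = (1 / Real.pi) * (a 2 ζ - a 1 ζ) - 1/4)
    (hS : ∀ ζ, hmS ζ = (1 / Real.pi) * (a 3 ζ - a 2 ζ) - 1/4)
    (z : ℂ → ℂ) (ϑ : ℂ → ℝ)
    (hz : ∀ ζ, z ζ = (hmE ζ : ℝ) + I * (hmN ζ : ℝ) - (hmW ζ : ℝ) - I * (hmS ζ : ℝ))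
    (hϑ : ∀ ζ, ϑ ζ = (Real.sqrt 2 / 2) * (hmE ζ - hmN ζ + hmW ζ - hmS ζ)) :
    (∀ ζ ∈ ball (0:ℂ) 1, a 0 ζ ∈ Set.Ioo (-(Real.pi / 4)) (3 * Real.pi / 4)) ∧
    (∃ C > (0:ℝ), ∃ δ > (0:ℝ), ∀ ζ ∈ ball (0:ℂ) 1,
      ‖ζ - Complex.exp ((Real.pi / 4 : ℝ) * I)‖ < δ →
      ‖z ζ - ((1 + I) / 2
            + ((1 - I) / Real.pi) * ((a 0 ζ : ℝ) - Real.pi / 4))‖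
          ≤ C * ‖ζ - Complex.exp ((Real.pi / 4 : ℝ) * I)‖ ∧
        |ϑ ζ - (Real.sqrt 2 / Real.pi) * (a 0 ζ - Real.pi / 4)|
          ≤ C * ‖ζ - Complex.exp ((Real.pi / 4 : ℝ) * I)‖) ∧
    segment ℝ (((1 : ℂ), (Real.sqrt 2 / 2 : ℝ)))
        ((I, -(Real.sqrt 2 / 2 : ℝ)))
      ⊆ closure ((fun ζ => (z ζ, ϑ ζ)) '' ball (0:ℂ) 1) := by
  have hb : ∀ m, EqOn (a m) (branchArg (arcAngle m)) (ball 0 1) :=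
    fun m => eqOn_branchArg (hacont m) (haarg m) (ha0 m)
  have hA0 : arcAngle 0 = π / 4 := by simp [arcAngle]
  have hrem : ∀ ζ ∈ ball (0 : ℂ) 1,
      (z ζ, ϑ ζ) - cornerMainTerm (a 0 ζ) = cornerRemainder ζ := by
    intro ζ hζ
    simp only [cornerRemainder, cornerDeviation_eq (show (1 : Fin 4) ≠ 0 by decide),
      cornerDeviation_eq (show (2 : Fin 4) ≠ 0 by decide),
      cornerDeviation_eq (show (3 : Fin 4) ≠ 0 by decide), ← hb _ hζ, cornerMainTerm,
      hz, hϑ, hE, hN, hW, hS]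
    norm_num [arcAngle]
    constructor <;> field_simp <;> ring
  obtain ⟨C, hC, hCO⟩ := cornerRemainder_isBigO.exists_pos
  obtain ⟨δ, hδ, hCδ⟩ := Metric.eventually_nhds_iff.1 hCO.bound
  refine ⟨fun ζ hζ => ?_, ⟨C, hC, δ, hδ, fun ζ hζ hζδ => ?_⟩,
    segment_subset_closure_image_of_tendsto ?_⟩
  · have h := branchArg_mem_Ioo (π / 4) hζ
    rw [hb 0 hζ, hA0]
    constructor <;> linarith [h.1, h.2]
  · have h := norm_prod_le_iff.1 (hrem ζ hζ ▸ hCδ (by rwa [dist_eq_norm]))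
    rwa [← Real.norm_eq_abs]
  · have hremLim := cornerRemainder_isBigO.trans_tendsto (tendsto_sub_nhds_zero_iff.2 tendsto_id)
    refine (hremLim.mono_left nhdsWithin_le_nhds).congr'
      (eventually_nhdsWithin_of_forall fun ζ hζ => ?_)
    dsimp only
    rw [← hA0, ← hb 0 hζ, hrem ζ hζ]
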